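/- arXiv:1812.08636 — 4 statements merged into one kernel-verified Lean document; each statement's English description precedes it below -/
import Mathlib

section
/- Let (Ω, F, P) be a probability space with a filtration (F_n)_{n≥1}, let T be an almost surely finite stopping time with respect to (F_n)_{n≥1}, and let X be a non-negative bounded random variable such that for each n ≥ 1 and every m ≥ n one has E[X | F_T] = E[X | F_m] almost surely on the event {T = n}. Then E[X | F_T] = E[X | F_∞] almost surely, where F_∞ := σ(⋃_{n≥1} F_n). -/
/-!
By Lévy's upward theorem, `E[X | ℱ m] → E[X | ℱ_∞]` almost surely as `m → ∞`. On `{T = n}` this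
sequence is constant equal to `E[X | ℱ_T]` from `m = n` on, so the two limits agree almost surely.
-/

open MeasureTheory Filter

theorem ae_eq_condExp_iSup_of_eventually_eq_condExp {Ω : Type*} {m0 : MeasurableSpace Ω}
    {P : Measure Ω} [IsFiniteMeasure P] (ℱ : Filtration ℕ m0) (X Y : Ω → ℝ)
    (hY : ∀ᵐ ω ∂P, ∀ᶠ m in atTop, Y ω = (P[X | ℱ m]) ω) :
    Y =ᵐ[P] P[X | ⨆ n, (ℱ n : MeasurableSpace Ω)] := by
  filter_upwards [tendsto_ae_condExp X, hY] with ω hlim hconst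
  exact tendsto_nhds_unique (tendsto_const_nhds.congr' hconst) hlim

theorem stmt0_general {Ω : Type*} {m0 : MeasurableSpace Ω} {P : Measure Ω} [IsProbabilityMeasure P]
    (ℱ : Filtration ℕ m0) (T : Ω → ℕ) (hT : IsStoppingTime ℱ (fun ω => (T ω : WithTop ℕ)))
    (X : Ω → ℝ)
    (hcond : ∀ n : ℕ, ∀ m ≥ n, ∀ᵐ ω ∂P, T ω = n →
      (P[X | hT.measurableSpace]) ω = (P[X | ℱ m]) ω) :
    P[X | hT.measurableSpace] =ᵐ[P] P[X | ⨆ n, (ℱ n : MeasurableSpace Ω)] := by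
  refine ae_eq_condExp_iSup_of_eventually_eq_condExp ℱ X _ ?_
  have hcond_all : ∀ᵐ ω ∂P, ∀ n m, n ≤ m → T ω = n →
      (P[X | hT.measurableSpace]) ω = (P[X | ℱ m]) ω := by
    refine ae_all_iff.2 fun n => ae_all_iff.2 fun m => ?_
    by_cases hnm : n ≤ m
    · filter_upwards [hcond n m hnm] with ω hω _ using hω
    · exact ae_of_all _ fun ω hnm' => absurd hnm' hnm
  filter_upwards [hcond_all] with ω hω
  filter_upwards [eventually_ge_atTop (T ω)] with m hm using hω _ m hm rfl

/-- If `T` is an (a.s. finite) stopping time with respect to a filtration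
`(ℱ n)` and `X` is a non-negative bounded random variable such that for each `n` and every
`m ≥ n` one has `E[X | ℱ_T] = E[X | ℱ m]` a.s. on `{T = n}`, then
`E[X | ℱ_T] = E[X | ℱ_∞]` a.s., where `ℱ_∞ = σ(⋃ n, ℱ n) = ⨆ n, ℱ n`. -/
theorem stmt0 {Ω : Type*} {m0 : MeasurableSpace Ω} {P : Measure Ω} [IsProbabilityMeasure P]
    (ℱ : Filtration ℕ m0) (T : Ω → ℕ) (hT : IsStoppingTime ℱ (fun ω => (T ω : WithTop ℕ)))
    (X : Ω → ℝ) (hXmeas : Measurable X) (hXnonneg : ∀ ω, 0 ≤ X ω)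
    (C : ℝ) (hXbdd : ∀ ω, X ω ≤ C)
    (hcond : ∀ n : ℕ, ∀ m ≥ n, ∀ᵐ ω ∂P, T ω = n →
      (P[X | hT.measurableSpace]) ω = (P[X | ℱ m]) ω) :
    P[X | hT.measurableSpace] =ᵐ[P] P[X | ⨆ n, (ℱ n : MeasurableSpace Ω)] :=
  stmt0_general ℱ T hT X hcond
end

section
/- Let ((ξ_{u,i})_{i≥0})_{u∈𝕌} be an i.i.d. family of random sequences with values in the set of sequences (x_i)_{i≥0} with x_i ∈ [0,1) for all i and Σ_{i≥0} x_i = 1, such that P(ξ_0 > 0 and ξ_1 > 0) = 1, and let β ∈ (0,1] satisfy E[ξ_0^β + ξ_1^β] = 1. Then for every integer p ≥ 1 one has sup_{n≥0} E[L_n^p] < ∞, where L_n := Σ_{u∈{0,1}^n} ξ̄_u^β; in fact sup_{n≥0} E[L_n^p] ≤ f(p) where f(1) := 1 and recursively f(p) := (Σ_{j=1}^{p−1} binom(p,j) f(j) f(p−j)) / (1 − E[ξ_0^{pβ} + ξ_1^{pβ}]) for p ≥ 2. -/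
open MeasureTheory ProbabilityTheory Filter
open scoped ENNReal Topology

noncomputable section

/-- `ξ̄_u`: the product of the entries of the sequences attached along the path from the
root to the word `u`, i.e. `ξ̄_{u₁…uₙ} = ∏_{k=1}^n ξ_{u₁…u_{k-1}, u_k}`, with `ξ̄_∅ = 1`. -/
def xibar {Ω : Type*} (ξ : List ℕ → ℕ → Ω → ℝ) (u : List ℕ) (ω : Ω) : ℝ :=
  ∏ k ∈ Finset.range u.length, ξ (u.take k) (u.getD k 0) ω

/-- `L_n = Σ_{u ∈ {0,1}^n} ξ̄_u^β`, with words of length `n` over `{0,1}` encoded as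
functions `Fin n → Fin 2`. -/
def Lmart {Ω : Type*} (ξ : List ℕ → ℕ → Ω → ℝ) (β : ℝ) (n : ℕ) (ω : Ω) : ℝ :=
  ∑ v : Fin n → Fin 2, (xibar ξ (List.ofFn fun i => (v i : ℕ)) ω) ^ β

/-!
Write `L_n^w` for the analogue of `L_n` on the subtree rooted at the word `w`. Then
`L_{n+1}^w = ξ_{w,0}^β L_n^{w0} + ξ_{w,1}^β L_n^{w1}`, and the three factors `ξ_w`, `L_n^{w0}`,
`L_n^{w1}` are independent since they are built from disjoint sets of nodes. Expanding the `p`-th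
power binomially and taking expectations, the two extreme terms give
`E[ξ_0^{pβ} + ξ_1^{pβ}] f(p)` by induction on `n`, and the term of index `0 < j < p` is at most
`C(p,j) f(j) f(p-j)` by induction on `p`, because `ξ_{w,i}^β ≤ 1`. The recursion defining `f` says
exactly that these contributions add up to `f(p)`.
-/

def subtree {Ω : Type*} (ξ : List ℕ → ℕ → Ω → ℝ) (w : List ℕ) : List ℕ → ℕ → Ω → ℝ :=
  fun u => ξ (w ++ u)

abbrev nodeSigma {Ω : Type*} (ξ : List ℕ → ℕ → Ω → ℝ) (S : Set (List ℕ)) : MeasurableSpace Ω :=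
  ⨆ u ∈ S, MeasurableSpace.comap (fun ω i => ξ u i ω) inferInstance

section Tree

variable {Ω : Type*} (ξ : List ℕ → ℕ → Ω → ℝ)

@[simp] lemma subtree_apply_nil (w : List ℕ) : subtree ξ w [] = ξ w := by simp [subtree]

lemma subtree_subtree (v w : List ℕ) : subtree (subtree ξ v) w = subtree ξ (v ++ w) := by
  funext u
  simp [subtree]

lemma xibar_cons (c : ℕ) (u : List ℕ) (ω : Ω) :
    xibar ξ (c :: u) ω = ξ [] c ω * xibar (subtree ξ [c]) u ω := by
  simp only [xibar, List.length_cons, Finset.prod_range_succ', List.take_zero,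
    List.getD_cons_zero, List.take_succ_cons, List.getD_cons_succ]
  rw [mul_comm]
  rfl

variable {ξ} {ω : Ω}

lemma xibar_nonneg (h : ∀ u i, 0 ≤ ξ u i ω) (u : List ℕ) : 0 ≤ xibar ξ u ω :=
  Finset.prod_nonneg fun _ _ => h _ _

lemma Lmart_nonneg (h : ∀ u i, 0 ≤ ξ u i ω) (β : ℝ) (n : ℕ) : 0 ≤ Lmart ξ β n ω :=
  Finset.sum_nonneg fun _ _ => Real.rpow_nonneg (xibar_nonneg h _) β

lemma Lmart_zero (β : ℝ) : Lmart ξ β 0 ω = 1 := by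
  simp [Lmart, xibar]

lemma Lmart_succ (h : ∀ u i, 0 ≤ ξ u i ω) (β : ℝ) (n : ℕ) :
    Lmart ξ β (n + 1) ω = ξ [] 0 ω ^ β * Lmart (subtree ξ [0]) β n ω +
      ξ [] 1 ω ^ β * Lmart (subtree ξ [1]) β n ω := by
  rw [Lmart, ← (Fin.consEquiv fun _ => Fin 2).sum_comp, Fintype.sum_prod_type, Fin.sum_univ_two]
  simp only [Lmart, Finset.mul_sum, Fin.consEquiv, Equiv.coe_fn_mk, List.ofFn_succ, Fin.cons_zero,
    Fin.cons_succ, xibar_cons, Fin.val_zero, Fin.val_one]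
  congr 1 <;> exact Finset.sum_congr rfl fun v _ =>
    Real.mul_rpow (h _ _) (xibar_nonneg (fun _ _ => h _ _) _)

lemma ofReal_Lmart_succ (h : ∀ u i, 0 ≤ ξ u i ω) (β : ℝ) (n : ℕ) :
    ENNReal.ofReal (Lmart ξ β (n + 1) ω) =
      ENNReal.ofReal (ξ [] 0 ω ^ β) * ENNReal.ofReal (Lmart (subtree ξ [0]) β n ω) +
      ENNReal.ofReal (ξ [] 1 ω ^ β) * ENNReal.ofReal (Lmart (subtree ξ [1]) β n ω) := by
  have hL : ∀ j, 0 ≤ Lmart (subtree ξ [j]) β n ω := fun j => Lmart_nonneg (fun _ _ => h _ _) β n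
  have hr : ∀ i, 0 ≤ ξ [] i ω ^ β := fun i => Real.rpow_nonneg (h _ _) β
  rw [Lmart_succ h, ENNReal.ofReal_add (mul_nonneg (hr 0) (hL 0)) (mul_nonneg (hr 1) (hL 1)),
    ENNReal.ofReal_mul (hr 0), ENNReal.ofReal_mul (hr 1)]

lemma measurable_xibar {m : MeasurableSpace Ω} (h : ∀ u i, Measurable[m] (ξ u i)) (u : List ℕ) :
    Measurable[m] (xibar ξ u) :=
  Finset.measurable_prod _ fun _ _ => h _ _

lemma measurable_Lmart {m : MeasurableSpace Ω} (h : ∀ u i, Measurable[m] (ξ u i)) (β : ℝ)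
    (n : ℕ) : Measurable[m] (Lmart ξ β n) :=
  Finset.measurable_sum _ fun _ _ => (measurable_xibar h _).pow_const β

end Tree

section NodeSigma

variable {Ω : Type*} {ξ : List ℕ → ℕ → Ω → ℝ}

lemma measurable_nodeSigma {S : Set (List ℕ)} {u : List ℕ} (hu : u ∈ S) (i : ℕ) :
    Measurable[nodeSigma ξ S] (ξ u i) :=
  ((measurable_pi_apply i).comp (comap_measurable _)).mono (le_iSup₂ (f := fun u _ =>
    MeasurableSpace.comap (fun ω i => ξ u i ω) inferInstance) u hu) le_rfl

lemma nodeSigma_union (S T : Set (List ℕ)) :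
    nodeSigma ξ (S ∪ T) = nodeSigma ξ S ⊔ nodeSigma ξ T :=
  iSup_union

lemma measurable_Lmart_subtree (β : ℝ) (n : ℕ) (v : List ℕ) :
    Measurable[nodeSigma ξ (Set.range (v ++ ·))] (Lmart (subtree ξ v) β n) :=
  measurable_Lmart (fun u i => measurable_nodeSigma (Set.mem_range_self u) i) β n

variable [MeasurableSpace Ω]

lemma nodeSigma_le (hmeas : ∀ u i, Measurable (ξ u i)) (S : Set (List ℕ)) :
    nodeSigma ξ S ≤ ‹MeasurableSpace Ω› :=
  iSup₂_le fun u _ => (measurable_pi_lambda _ (hmeas u)).comap_le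

lemma indep_nodeSigma {P : Measure Ω} (hmeas : ∀ u i, Measurable (ξ u i))
    (hindep : iIndepFun (m := fun _ : List ℕ => (inferInstance : MeasurableSpace (ℕ → ℝ)))
      (fun u ω i => ξ u i ω) P) {S T : Set (List ℕ)} (hST : Disjoint S T) :
    Indep (nodeSigma ξ S) (nodeSigma ξ T) P :=
  indep_iSup_of_disjoint (fun u => (measurable_pi_lambda _ (hmeas u)).comap_le) hindep.iIndep hST

end NodeSigma

theorem lintegral_mul_add_mul_pow {Ω : Type*} {m₁ m₂ m₃ mΩ : MeasurableSpace Ω} {P : Measure Ω}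
    (h₁ : m₁ ≤ mΩ) (h₂ : m₂ ≤ mΩ) (h₃ : m₃ ≤ mΩ)
    (hind₁ : Indep m₁ (m₂ ⊔ m₃) P) (hind₂₃ : Indep m₂ m₃ P)
    {a b Y Z : Ω → ℝ≥0∞} (ha : Measurable[m₁] a) (hb : Measurable[m₁] b)
    (hY : Measurable[m₂] Y) (hZ : Measurable[m₃] Z) (p : ℕ) :
    ∫⁻ ω, (a ω * Y ω + b ω * Z ω) ^ p ∂P =
      ∑ j ∈ Finset.range (p + 1), (p.choose j : ℝ≥0∞) * (∫⁻ ω, a ω ^ j * b ω ^ (p - j) ∂P) *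
        ((∫⁻ ω, Y ω ^ j ∂P) * ∫⁻ ω, Z ω ^ (p - j) ∂P) := by
  have hab : ∀ j, Measurable[m₁] fun ω => a ω ^ j * b ω ^ (p - j) :=
    fun j => (ha.pow_const j).mul (hb.pow_const _)
  have hYZ : ∀ j, Measurable[m₂ ⊔ m₃] fun ω => Y ω ^ j * Z ω ^ (p - j) := fun j =>
    ((hY.mono le_sup_left le_rfl).pow_const j).mul ((hZ.mono le_sup_right le_rfl).pow_const _)
  have hexp : ∀ ω, (a ω * Y ω + b ω * Z ω) ^ p = ∑ j ∈ Finset.range (p + 1),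
      (p.choose j : ℝ≥0∞) * ((a ω ^ j * b ω ^ (p - j)) * (Y ω ^ j * Z ω ^ (p - j))) := by
    intro ω
    rw [add_pow]
    exact Finset.sum_congr rfl fun j _ => by ring
  have hm : ∀ j, Measurable[mΩ] fun ω => a ω ^ j * b ω ^ (p - j) * (Y ω ^ j * Z ω ^ (p - j)) :=
    fun j => ((hab j).mono h₁ le_rfl).mul ((hYZ j).mono (sup_le h₂ h₃) le_rfl)
  simp_rw [hexp]
  rw [lintegral_finsetSum _ fun j _ => (hm j).const_mul _]
  refine Finset.sum_congr rfl fun j _ => ?_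
  rw [lintegral_const_mul _ (hm j),
    lintegral_mul_eq_lintegral_mul_lintegral_of_independent_measurableSpace h₁ (sup_le h₂ h₃)
      hind₁ (hab j) (hYZ j),
    lintegral_mul_eq_lintegral_mul_lintegral_of_independent_measurableSpace h₂ h₃ hind₂₃
      (hY.pow_const j) (hZ.pow_const _), mul_assoc]

lemma lintegral_pow_mul_pow_le_one {Ω : Type*} [MeasurableSpace Ω] {P : Measure Ω}
    [IsProbabilityMeasure P] {a b : Ω → ℝ≥0∞} (h : ∀ᵐ ω ∂P, a ω ≤ 1 ∧ b ω ≤ 1) (j k : ℕ) :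
    ∫⁻ ω, a ω ^ j * b ω ^ k ∂P ≤ 1 := by
  calc ∫⁻ ω, a ω ^ j * b ω ^ k ∂P ≤ ∫⁻ _, 1 ∂P := lintegral_mono_ae <| h.mono fun ω hω =>
        mul_le_one' (pow_le_one₀ zero_le hω.1) (pow_le_one₀ zero_le hω.2)
    _ = 1 := by simp

lemma ofReal_rpow_pow {t : ℝ} (ht : 0 ≤ t) (β : ℝ) (p : ℕ) :
    ENNReal.ofReal (t ^ β) ^ p = ENNReal.ofReal (t ^ ((p : ℝ) * β)) := by
  rw [← ENNReal.ofReal_pow (Real.rpow_nonneg ht β), ← Real.rpow_natCast, ← Real.rpow_mul ht,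
    mul_comm]

lemma ofReal_rpow_pow_lt {t β : ℝ} (ht0 : 0 < t) (ht1 : t < 1) (hβ : 0 < β) {p : ℕ}
    (hp : 1 < p) : ENNReal.ofReal (t ^ β) ^ p < ENNReal.ofReal (t ^ β) := by
  have hs0 : 0 < t ^ β := Real.rpow_pos_of_pos ht0 β
  rw [← ENNReal.ofReal_pow hs0.le, ENNReal.ofReal_lt_ofReal_iff hs0]
  exact pow_lt_self_of_lt_one₀ hs0 (Real.rpow_lt_one ht0.le ht1 hβ) hp

lemma ofReal_integral_rpow_add_rpow {Ω : Type*} [MeasurableSpace Ω] {P : Measure Ω}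
    [IsFiniteMeasure P] {x y : Ω → ℝ} (hx : Measurable x) (hy : Measurable y)
    (h : ∀ᵐ ω ∂P, x ω ∈ Set.Icc (0 : ℝ) 1 ∧ y ω ∈ Set.Icc (0 : ℝ) 1) {β : ℝ} (hβ : 0 ≤ β)
    (p : ℕ) :
    ENNReal.ofReal (∫ ω, x ω ^ ((p : ℝ) * β) + y ω ^ ((p : ℝ) * β) ∂P) =
      ∫⁻ ω, ENNReal.ofReal (x ω ^ β) ^ p + ENNReal.ofReal (y ω ^ β) ^ p ∂P := by
  have hq : 0 ≤ (p : ℝ) * β := by positivity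
  rw [ofReal_integral_eq_lintegral_ofReal]
  · refine lintegral_congr_ae (h.mono fun ω hω => ?_)
    dsimp only
    rw [ENNReal.ofReal_add (Real.rpow_nonneg hω.1.1 _) (Real.rpow_nonneg hω.2.1 _),
      ofReal_rpow_pow hω.1.1, ofReal_rpow_pow hω.2.1]
  · refine Integrable.of_bound (by fun_prop) 2 (h.mono fun ω hω => ?_)
    have := Real.rpow_le_one hω.1.1 hω.1.2 hq
    have := Real.rpow_le_one hω.2.1 hω.2.2 hq
    rw [Real.norm_of_nonneg (add_nonneg (Real.rpow_nonneg hω.1.1 _) (Real.rpow_nonneg hω.2.1 _))]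
    linarith
  · exact h.mono fun ω hω => add_nonneg (Real.rpow_nonneg hω.1.1 _) (Real.rpow_nonneg hω.2.1 _)

lemma integral_rpow_add_rpow_lt_one {Ω : Type*} [MeasurableSpace Ω] {P : Measure Ω}
    [IsProbabilityMeasure P] {x y : Ω → ℝ} (hx : Measurable x) (hy : Measurable y)
    (h : ∀ᵐ ω ∂P, x ω ∈ Set.Ioo (0 : ℝ) 1 ∧ y ω ∈ Set.Ioo (0 : ℝ) 1) {β : ℝ} (hβ : 0 < β)
    (h1 : ∫ ω, x ω ^ β + y ω ^ β ∂P = 1) {p : ℕ} (hp : 2 ≤ p) :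
    ∫ ω, x ω ^ ((p : ℝ) * β) + y ω ^ ((p : ℝ) * β) ∂P < 1 := by
  have hofReal := ofReal_integral_rpow_add_rpow hx hy
    (h.mono fun ω h => ⟨Set.Ioo_subset_Icc_self h.1, Set.Ioo_subset_Icc_self h.2⟩) hβ.le
  rw [← ENNReal.ofReal_lt_one, hofReal p]
  calc ∫⁻ ω, ENNReal.ofReal (x ω ^ β) ^ p + ENNReal.ofReal (y ω ^ β) ^ p ∂P
      < ∫⁻ ω, ENNReal.ofReal (x ω ^ β) ^ 1 + ENNReal.ofReal (y ω ^ β) ^ 1 ∂P := by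
        refine lintegral_strict_mono (NeZero.ne P) (by fun_prop)
          (hofReal p ▸ ENNReal.ofReal_ne_top) (h.mono fun ω hω => ?_)
        rw [pow_one, pow_one]
        exact ENNReal.add_lt_add (ofReal_rpow_pow_lt hω.1.1 hω.1.2 hβ hp)
          (ofReal_rpow_pow_lt hω.2.1 hω.2.2 hβ hp)
    _ = 1 := by rw [← hofReal 1, Nat.cast_one, one_mul, h1, ENNReal.ofReal_one]

def binomialConv (f : ℕ → ℝ) (p : ℕ) : ℝ :=
  ∑ j ∈ Finset.Ico 1 p, (p.choose j : ℝ) * f j * f (p - j)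

section Recursion

variable {c f : ℕ → ℝ} (hfrec : ∀ p, 2 ≤ p → f p = binomialConv f p / (1 - c p))
include hfrec

lemma one_le_of_binomialConv_rec (hf1 : f 1 = 1) (hc0 : ∀ p, 0 ≤ c p)
    (hclt : ∀ p, 2 ≤ p → c p < 1) : ∀ p, 1 ≤ p → 1 ≤ f p := by
  intro p
  induction p using Nat.strong_induction_on with
  | _ p ih =>
  intro hp
  obtain rfl | hp2 := hp.eq_or_lt
  · exact hf1.ge
  have hterm : ∀ j ∈ Finset.Ico 1 p, 0 ≤ (p.choose j : ℝ) * f j * f (p - j) := fun j hj => by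
    obtain ⟨h1, h2⟩ := Finset.mem_Ico.1 hj
    have := ih j h2 h1
    have := ih (p - j) (by omega) (by omega)
    positivity
  have hS : 1 ≤ binomialConv f p := calc
    (1 : ℝ) ≤ (p.choose 1 : ℝ) * f 1 * f (p - 1) := by
      have := ih (p - 1) (by omega) (by omega)
      have : (1 : ℝ) ≤ p := by exact_mod_cast hp
      rw [hf1, Nat.choose_one_right, mul_one]
      nlinarith
    _ ≤ binomialConv f p := Finset.single_le_sum hterm (Finset.mem_Ico.2 ⟨le_rfl, hp2⟩)
  rw [hfrec p hp2, le_div_iff₀ (by linarith [hclt p hp2])]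
  linarith [hc0 p]

lemma binomialConv_add_mul_eq (hc1 : c 1 = 1) (hclt : ∀ p, 2 ≤ p → c p < 1) :
    ∀ p, 1 ≤ p → binomialConv f p + c p * f p = f p := by
  intro p hp
  obtain rfl | hp2 := hp.eq_or_lt
  · simp [binomialConv, hc1]
  rw [hfrec p hp2]
  field_simp [(sub_pos.2 (hclt p hp2)).ne']
  ring

end Recursion

lemma sum_choose_mul_le_ofReal {p : ℕ} (hp : 1 ≤ p) {f : ℕ → ℝ} (hf : ∀ j, 1 ≤ j → 0 ≤ f j)
    {c : ℝ} (hc : 0 ≤ c) (hrec : binomialConv f p + c * f p = f p)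
    {R M N : ℕ → ℝ≥0∞} (hR : ∀ j, R j ≤ 1) (hRc : R 0 + R p = ENNReal.ofReal c)
    (hM0 : M 0 = 1) (hN0 : N 0 = 1) (hM : ∀ j, 1 ≤ j → j ≤ p → M j ≤ ENNReal.ofReal (f j))
    (hN : ∀ j, 1 ≤ j → j ≤ p → N j ≤ ENNReal.ofReal (f j)) :
    ∑ j ∈ Finset.range (p + 1), (p.choose j : ℝ≥0∞) * R j * (M j * N (p - j)) ≤
      ENNReal.ofReal (f p) := by
  have hterm : ∀ j ∈ Finset.Ico 1 p, 0 ≤ (p.choose j : ℝ) * f j * f (p - j) := fun j hj => by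
    obtain ⟨h1, h2⟩ := Finset.mem_Ico.1 hj
    have := hf j h1
    have := hf (p - j) (by omega)
    positivity
  have hmid : ∑ j ∈ Finset.Ico 1 p, (p.choose j : ℝ≥0∞) * R j * (M j * N (p - j)) ≤
      ENNReal.ofReal (binomialConv f p) := by
    rw [binomialConv, ENNReal.ofReal_sum_of_nonneg hterm]
    refine Finset.sum_le_sum fun j hj => ?_
    obtain ⟨h1, h2⟩ := Finset.mem_Ico.1 hj
    calc (p.choose j : ℝ≥0∞) * R j * (M j * N (p - j))
        ≤ (p.choose j : ℝ≥0∞) * 1 * (ENNReal.ofReal (f j) * ENNReal.ofReal (f (p - j))) := by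
          gcongr
          exacts [hR j, hM j h1 h2.le, hN (p - j) (by omega) (by omega)]
      _ = ENNReal.ofReal ((p.choose j : ℝ) * f j * f (p - j)) := by
          rw [mul_one, ENNReal.ofReal_mul (by have := hf j h1; positivity),
            ENNReal.ofReal_mul (Nat.cast_nonneg _), ENNReal.ofReal_natCast, mul_assoc]
  have hsplit : ∑ j ∈ Finset.range (p + 1), (p.choose j : ℝ≥0∞) * R j * (M j * N (p - j)) =
      (R 0 * N p + ∑ j ∈ Finset.Ico 1 p, (p.choose j : ℝ≥0∞) * R j * (M j * N (p - j))) +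
        R p * M p := by
    rw [Finset.sum_range_succ, Finset.range_eq_Ico,
      Finset.sum_eq_sum_Ico_succ_bot (by omega : 0 < p)]
    simp [hM0, hN0]
  calc _ = _ := hsplit
    _ ≤ (R 0 * ENNReal.ofReal (f p) + ENNReal.ofReal (binomialConv f p)) +
        R p * ENNReal.ofReal (f p) := by
      gcongr
      exacts [hN p hp le_rfl, hM p hp le_rfl]
    _ = ENNReal.ofReal (binomialConv f p) + ENNReal.ofReal c * ENNReal.ofReal (f p) := by
      rw [← hRc]; ring
    _ = ENNReal.ofReal (f p) := by
      have hS : 0 ≤ binomialConv f p := Finset.sum_nonneg hterm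
      rw [← ENNReal.ofReal_mul hc, ← ENNReal.ofReal_add hS
        (mul_nonneg hc (hf p hp)), hrec]

section Moments

variable {Ω : Type*} [MeasurableSpace Ω] {P : Measure Ω} {ξ : List ℕ → ℕ → Ω → ℝ}

lemma lintegral_node_eq_root
    (hident : ∀ u : List ℕ, IdentDistrib (fun ω i => ξ u i ω) (fun ω i => ξ [] i ω) P P)
    (w : List ℕ) (β : ℝ) (j k : ℕ) :
    ∫⁻ ω, ENNReal.ofReal (ξ w 0 ω ^ β) ^ j * ENNReal.ofReal (ξ w 1 ω ^ β) ^ k ∂P =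
      ∫⁻ ω, ENNReal.ofReal (ξ [] 0 ω ^ β) ^ j * ENNReal.ofReal (ξ [] 1 ω ^ β) ^ k ∂P :=
  ((hident w).comp (u := fun x : ℕ → ℝ =>
    ENNReal.ofReal (x 0 ^ β) ^ j * ENNReal.ofReal (x 1 ^ β) ^ k) (by fun_prop)).lintegral_eq

theorem lintegral_ofReal_Lmart_subtree_pow_le [IsProbabilityMeasure P]
    (hmeas : ∀ u i, Measurable (ξ u i))
    (hindep : iIndepFun (m := fun _ : List ℕ => (inferInstance : MeasurableSpace (ℕ → ℝ)))
      (fun u ω i => ξ u i ω) P)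
    (hident : ∀ u : List ℕ, IdentDistrib (fun ω i => ξ u i ω) (fun ω i => ξ [] i ω) P P)
    (hnonneg : ∀ᵐ ω ∂P, ∀ u i, 0 ≤ ξ u i ω) {β : ℝ}
    (hle : ∀ᵐ ω ∂P, ξ [] 0 ω ^ β ≤ 1 ∧ ξ [] 1 ω ^ β ≤ 1) {c f : ℕ → ℝ} (hc0 : ∀ p, 0 ≤ c p)
    (hc : ∀ p : ℕ, ENNReal.ofReal (c p) =
      ∫⁻ ω, ENNReal.ofReal (ξ [] 0 ω ^ β) ^ p + ENNReal.ofReal (ξ [] 1 ω ^ β) ^ p ∂P)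
    (hf : ∀ p, 1 ≤ p → 1 ≤ f p) (hrec : ∀ p, 1 ≤ p → binomialConv f p + c p * f p = f p) :
    ∀ p, 1 ≤ p → ∀ n w,
      ∫⁻ ω, ENNReal.ofReal (Lmart (subtree ξ w) β n ω) ^ p ∂P ≤ ENNReal.ofReal (f p) := by
  intro p
  induction p using Nat.strong_induction_on with
  | _ p ihp =>
  intro hp n
  induction n with
  | zero =>
    intro w
    simp only [Lmart_zero, ENNReal.ofReal_one, one_pow, lintegral_const, measure_univ, mul_one]
    exact ENNReal.one_le_ofReal.2 (hf p hp)
  | succ n ihn =>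
    intro w
    have hsucc : ∀ᵐ ω ∂P, ENNReal.ofReal (Lmart (subtree ξ w) β (n + 1) ω) =
        ENNReal.ofReal (ξ w 0 ω ^ β) * ENNReal.ofReal (Lmart (subtree ξ (w ++ [0])) β n ω) +
        ENNReal.ofReal (ξ w 1 ω ^ β) * ENNReal.ofReal (Lmart (subtree ξ (w ++ [1])) β n ω) := by
      filter_upwards [hnonneg] with ω hω
      simpa only [subtree_apply_nil, subtree_subtree] using
        ofReal_Lmart_succ (ξ := subtree ξ w) (fun u i => hω _ i) β n
    have hdisj : Disjoint (Set.range ((w ++ [0]) ++ ·)) (Set.range ((w ++ [1]) ++ ·)) := by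
      rw [Set.disjoint_left]
      rintro _ ⟨u, rfl⟩ ⟨v, h⟩
      simp at h
    have hroot : Disjoint {w} (Set.range ((w ++ [0]) ++ ·) ∪ Set.range ((w ++ [1]) ++ ·)) := by
      simp
    have hroot_meas : ∀ i, Measurable[nodeSigma ξ {w}] fun ω => ENNReal.ofReal (ξ w i ω ^ β) :=
      fun i => ((measurable_nodeSigma (Set.mem_singleton w) i).pow_const β).ennreal_ofReal
    rw [lintegral_congr_ae (hsucc.mono fun ω h => by rw [h]),
      lintegral_mul_add_mul_pow (nodeSigma_le hmeas _) (nodeSigma_le hmeas _)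
        (nodeSigma_le hmeas _) (nodeSigma_union _ _ ▸ indep_nodeSigma hmeas hindep hroot)
        (indep_nodeSigma hmeas hindep hdisj) (hroot_meas 0) (hroot_meas 1)
        (measurable_Lmart_subtree β n _).ennreal_ofReal
        (measurable_Lmart_subtree β n _).ennreal_ofReal]
    simp only [lintegral_node_eq_root hident w]
    refine sum_choose_mul_le_ofReal
      (R := fun j => ∫⁻ ω, ENNReal.ofReal (ξ [] 0 ω ^ β) ^ j *
        ENNReal.ofReal (ξ [] 1 ω ^ β) ^ (p - j) ∂P)
      (M := fun j => ∫⁻ ω, ENNReal.ofReal (Lmart (subtree ξ (w ++ [0])) β n ω) ^ j ∂P)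
      (N := fun j => ∫⁻ ω, ENNReal.ofReal (Lmart (subtree ξ (w ++ [1])) β n ω) ^ j ∂P)
      hp (fun j hj => zero_le_one.trans (hf j hj)) (hc0 p) (hrec p hp)
      (fun j => lintegral_pow_mul_pow_le_one
        (hle.mono fun ω h => ⟨ENNReal.ofReal_le_one.2 h.1, ENNReal.ofReal_le_one.2 h.2⟩) _ _)
      ?_ ?_ ?_ (fun j h1 h2 => ?_) (fun j h1 h2 => ?_)
    · rw [hc p, lintegral_add_left (by fun_prop)]
      simp [add_comm]
    · simp
    · simp
    · rcases h2.lt_or_eq with h2 | rfl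
      exacts [ihp j h2 h1 n _, ihn _]
    · rcases h2.lt_or_eq with h2 | rfl
      exacts [ihp j h2 h1 n _, ihn _]

end Moments

/-- In the setting of the martingale `L_n = Σ_{u∈{0,1}^n} ξ̄_u^β`, for every
integer `p ≥ 1`, `sup_{n≥0} E[L_n^p] < ∞`; in fact `E[L_n^p] ≤ f p` for all `n`, where
`f 1 = 1` and recursively
`f p = (Σ_{j=1}^{p-1} C(p,j) f j f (p-j)) / (1 - E[ξ_0^{pβ} + ξ_1^{pβ}])` for `p ≥ 2`. -/
theorem stmt3 {Ω : Type*} [m0 : MeasurableSpace Ω] {P : Measure Ω} [IsProbabilityMeasure P]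
    (ξ : List ℕ → ℕ → Ω → ℝ)
    (hmeas : ∀ u i, Measurable (ξ u i))
    (hindep : iIndepFun (m := fun _ : List ℕ => (inferInstance : MeasurableSpace (ℕ → ℝ)))
      (fun u ω i => ξ u i ω) P)
    (hident : ∀ u : List ℕ, IdentDistrib (fun ω i => ξ u i ω) (fun ω i => ξ [] i ω) P P)
    (hval : ∀ u : List ℕ, ∀ᵐ ω ∂P,
      (∀ i, ξ u i ω ∈ Set.Ico (0 : ℝ) 1) ∧ (∑' i, ξ u i ω) = 1)
    (hpos : ∀ᵐ ω ∂P, 0 < ξ [] 0 ω ∧ 0 < ξ [] 1 ω)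
    (β : ℝ) (hβ : β ∈ Set.Ioc (0 : ℝ) 1)
    (hβ1 : ∫ ω, ((ξ [] 0 ω) ^ β + (ξ [] 1 ω) ^ β) ∂P = 1)
    (f : ℕ → ℝ) (hf1 : f 1 = 1)
    (hfrec : ∀ p : ℕ, 2 ≤ p →
      f p = (∑ j ∈ Finset.Ico 1 p, (p.choose j : ℝ) * f j * f (p - j)) /
        (1 - ∫ ω, ((ξ [] 0 ω) ^ ((p : ℝ) * β) + (ξ [] 1 ω) ^ ((p : ℝ) * β)) ∂P)) :
    ∀ p : ℕ, 1 ≤ p → ∀ n : ℕ,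
      ∫⁻ ω, ENNReal.ofReal ((Lmart ξ β n ω) ^ p) ∂P ≤ ENNReal.ofReal (f p) := by
  have hnonneg : ∀ᵐ ω ∂P, ∀ u i, 0 ≤ ξ u i ω :=
    ae_all_iff.2 fun u => (hval u).mono fun ω hω i => (hω.1 i).1
  have h01 : ∀ᵐ ω ∂P, ξ [] 0 ω ∈ Set.Ico (0 : ℝ) 1 ∧ ξ [] 1 ω ∈ Set.Ico (0 : ℝ) 1 :=
    (hval []).mono fun ω hω => ⟨hω.1 0, hω.1 1⟩
  set c : ℕ → ℝ := fun p => ∫ ω, ((ξ [] 0 ω) ^ ((p : ℝ) * β) + (ξ [] 1 ω) ^ ((p : ℝ) * β)) ∂P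
  have hc (p : ℕ) := ofReal_integral_rpow_add_rpow (hmeas [] 0) (hmeas [] 1)
    (h01.mono fun ω h => ⟨Set.Ico_subset_Icc_self h.1, Set.Ico_subset_Icc_self h.2⟩) hβ.1.le p
  have hc0 (p : ℕ) : 0 ≤ c p := integral_nonneg_of_ae <|
    h01.mono fun ω h => add_nonneg (Real.rpow_nonneg h.1.1 _) (Real.rpow_nonneg h.2.1 _)
  have hc1 : c 1 = 1 := by simpa [c] using hβ1
  have hclt (p : ℕ) (hp : 2 ≤ p) : c p < 1 :=
    integral_rpow_add_rpow_lt_one (hmeas [] 0) (hmeas [] 1)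
      ((h01.and hpos).mono fun ω h => ⟨⟨h.2.1, h.1.1.2⟩, ⟨h.2.2, h.1.2.2⟩⟩) hβ.1 hβ1 hp
  have hle : ∀ᵐ ω ∂P, ξ [] 0 ω ^ β ≤ 1 ∧ ξ [] 1 ω ^ β ≤ 1 := h01.mono fun ω h =>
    ⟨Real.rpow_le_one h.1.1 h.1.2.le hβ.1.le, Real.rpow_le_one h.2.1 h.2.2.le hβ.1.le⟩
  intro p hp n
  calc ∫⁻ ω, ENNReal.ofReal (Lmart ξ β n ω ^ p) ∂P
      = ∫⁻ ω, ENNReal.ofReal (Lmart (subtree ξ []) β n ω) ^ p ∂P :=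
        lintegral_congr_ae (hnonneg.mono fun ω h => ENNReal.ofReal_pow (Lmart_nonneg h β n) p)
    _ ≤ ENNReal.ofReal (f p) :=
        lintegral_ofReal_Lmart_subtree_pow_le hmeas hindep hident hnonneg hle hc0 hc
          (one_le_of_binomialConv_rec hfrec hf1 hc0 hclt) (binomialConv_add_mul_eq hfrec hc1 hclt)
          p hp n []
end
end

section
/- Let ((ξ_{u,i})_{i≥0})_{u∈𝕌} be an i.i.d. family of random sequences with values in the set of sequences (x_i)_{i≥0} with x_i ∈ [0,1) for all i and Σ_{i≥0} x_i = 1, let β ∈ (0,1], and let (Y_u)_{u∈𝕌} be an i.i.d. family of non-negative square-integrable random variables, independent of the family ((ξ_{u,i})_{i≥0})_{u∈𝕌}. Set m := E[Y_∅], L_n := Σ_{u∈{0,1}^n} ξ̄_u^β and L̃_n := Σ_{u∈{0,1}^n} ξ̄_u^β Y_u. Then for every n ≥ 0, E[(L̃_n − m·L_n)^2] = Var(Y_∅) · (E[ξ_0^{2β} + ξ_1^{2β}])^n. -/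
open MeasureTheory ProbabilityTheory Filter
open scoped ENNReal Topology

noncomputable section

/-- `L̃_n = Σ_{u ∈ {0,1}^n} ξ̄_u^β Y_u`. -/
def Ltilde {Ω : Type*} (ξ : List ℕ → ℕ → Ω → ℝ) (Y : List ℕ → Ω → ℝ) (β : ℝ)
    (n : ℕ) (ω : Ω) : ℝ :=
  ∑ v : Fin n → Fin 2,
    (xibar ξ (List.ofFn fun i => (v i : ℕ)) ω) ^ β * Y (List.ofFn fun i => (v i : ℕ)) ω

open Finset

theorem prod_range_length_getD_ofFn {M : Type*} [CommMonoid M] {n : ℕ} (v : Fin n → ℕ)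
    (c : ℕ → M) :
    ∏ k ∈ range (List.ofFn v).length, c ((List.ofFn v).getD k 0) = ∏ k, c (v k) := by
  rw [List.length_ofFn, ← Fin.prod_univ_eq_prod_range]
  simp

theorem injective_take_fin_length {α : Type*} (w : List α) :
    Function.Injective fun k : Fin w.length => w.take k := fun k l hkl => by
  have := congrArg List.length hkl
  simp only [List.length_take, min_eq_left k.isLt.le, min_eq_left l.isLt.le] at this
  exact Fin.ext this

section Moments

variable {Ω ι : Type*} [MeasurableSpace Ω] {P : Measure Ω}

theorem memLp_rpow_of_ae_mem_Icc [IsFiniteMeasure P] {X : Ω → ℝ} (hX : Measurable X)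
    (h01 : ∀ᵐ ω ∂P, X ω ∈ Set.Icc 0 1) {b : ℝ} (hb : 0 ≤ b) (p : ℝ≥0∞) :
    MemLp (fun ω => X ω ^ b) p P := by
  refine MemLp.of_bound (hX.pow_const b).aestronglyMeasurable 1 ?_
  filter_upwards [h01] with ω hω
  rw [Real.norm_of_nonneg (Real.rpow_nonneg hω.1 b)]
  exact Real.rpow_le_one hω.1 hω.2 hb

theorem ProbabilityTheory.IdentDistrib.integral_sq_sub_integral_eq_variance {X Y : Ω → ℝ}
    (h : IdentDistrib X Y P P) :
    ∫ ω, (X ω - ∫ ω', Y ω' ∂P) ^ 2 ∂P = variance Y P := by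
  rw [← h.variance_eq, variance_eq_integral h.aemeasurable_fst, h.integral_eq]

variable [Fintype ι]

theorem integral_sq_sum_mul_of_indepFun {A B : ι → Ω → ℝ}
    (hA : ∀ i, MemLp (A i) 2 P) (hB : ∀ i, MemLp (B i) 2 P)
    (hB_mean : ∀ i, ∫ ω, B i ω ∂P = 0)
    (hB_indep : Pairwise fun i j => IndepFun (B i) (B j) P)
    (hAB : IndepFun (fun ω i => A i ω) (fun ω i => B i ω) P) :
    ∫ ω, (∑ i, A i ω * B i ω) ^ 2 ∂P
      = ∑ i, (∫ ω, A i ω ^ 2 ∂P) * ∫ ω, B i ω ^ 2 ∂P := by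
  have hAB' : ∀ i j, IndepFun (fun ω => A i ω * A j ω) (fun ω => B i ω * B j ω) P :=
    fun i j => hAB.comp (φ := fun a : ι → ℝ => a i * a j) (ψ := fun b : ι → ℝ => b i * b j)
      (by fun_prop) (by fun_prop)
  have hint : ∀ i j, Integrable (fun ω => A i ω * A j ω * (B i ω * B j ω)) P := fun i j =>
    (hAB' i j).integrable_mul ((hA i).integrable_mul (hA j)) ((hB i).integrable_mul (hB j))
  have hterm : ∀ i j, ∫ ω, A i ω * A j ω * (B i ω * B j ω) ∂P
      = (∫ ω, A i ω * A j ω ∂P) * ∫ ω, B i ω * B j ω ∂P := fun i j =>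
    (hAB' i j).integral_fun_mul_eq_mul_integral
      ((hA i).1.mul (hA j).1) ((hB i).1.mul (hB j).1)
  have horth : ∀ i j, i ≠ j → ∫ ω, B i ω * B j ω ∂P = 0 := fun i j hij => by
    rw [(hB_indep hij).integral_fun_mul_eq_mul_integral (hB i).1 (hB j).1, hB_mean i, zero_mul]
  calc ∫ ω, (∑ i, A i ω * B i ω) ^ 2 ∂P
      = ∫ ω, ∑ i, ∑ j, A i ω * A j ω * (B i ω * B j ω) ∂P := by
        congr! 2 with ω
        rw [sq, sum_mul_sum]
        exact sum_congr rfl fun i _ => sum_congr rfl fun j _ => by ring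
    _ = ∑ i, ∑ j, (∫ ω, A i ω * A j ω ∂P) * ∫ ω, B i ω * B j ω ∂P := by
        rw [integral_finsetSum _ fun i _ => integrable_finsetSum _ fun j _ => hint i j]
        simp_rw [integral_finsetSum _ fun j _ => hint _ j, hterm]
    _ = ∑ i, (∫ ω, A i ω ^ 2 ∂P) * ∫ ω, B i ω ^ 2 ∂P := by
        refine sum_congr rfl fun i _ => ?_
        rw [Fintype.sum_eq_single i fun j hji => by rw [horth i j hji.symm, mul_zero]]
        simp only [sq]

theorem integral_sq_sum_mul_sub_integral [IsProbabilityMeasure P] {A B : ι → Ω → ℝ}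
    {Z : Ω → ℝ} (hA : ∀ i, MemLp (A i) 2 P) (hZ : MemLp Z 2 P)
    (hB : ∀ i, IdentDistrib (B i) Z P P) (hB_indep : Pairwise fun i j => IndepFun (B i) (B j) P)
    (hAB : IndepFun (fun ω i => A i ω) (fun ω i => B i ω) P) :
    ∫ ω, (∑ i, A i ω * (B i ω - ∫ ω', Z ω' ∂P)) ^ 2 ∂P
      = variance Z P * ∑ i, ∫ ω, A i ω ^ 2 ∂P := by
  set m := ∫ ω, Z ω ∂P
  have hB_L2 : ∀ i, MemLp (B i) 2 P := fun i => (hB i).symm.memLp_snd hZ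
  have hB_centered : ∀ i, ∫ ω, B i ω - m ∂P = 0 := fun i => by
    rw [integral_sub ((hB_L2 i).integrable one_le_two) (integrable_const m), (hB i).integral_eq]
    simp [m]
  rw [integral_sq_sum_mul_of_indepFun (B := fun i ω => B i ω - m) hA
      (fun i => (hB_L2 i).sub (memLp_const m)) hB_centered
      (fun i j hij => (hB_indep hij).comp (measurable_id.sub_const m) (measurable_id.sub_const m))
      (hAB.comp measurable_id (by fun_prop : Measurable fun (b : ι → ℝ) i => b i - m)),
    mul_sum]
  exact sum_congr rfl fun i _ => by rw [(hB i).integral_sq_sub_integral_eq_variance, mul_comm]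

end Moments

section Tree

variable {Ω : Type*} [MeasurableSpace Ω] {P : Measure Ω} {ξ : List ℕ → ℕ → Ω → ℝ}

theorem integral_prod_along_word (hmeas : ∀ u i, Measurable (ξ u i))
    (hindep : iIndepFun (m := fun _ : List ℕ => (inferInstance : MeasurableSpace (ℕ → ℝ)))
      (fun u ω i => ξ u i ω) P)
    (hident : ∀ u : List ℕ, IdentDistrib (fun ω i => ξ u i ω) (fun ω i => ξ [] i ω) P P)
    {f : ℝ → ℝ} (hf : Measurable f) (w : List ℕ) :
    ∫ ω, ∏ k ∈ range w.length, f (ξ (w.take k) (w.getD k 0) ω) ∂P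
      = ∏ k ∈ range w.length, ∫ ω, f (ξ [] (w.getD k 0) ω) ∂P := by
  simp only [← Fin.prod_univ_eq_prod_range (fun k => f (ξ (w.take k) (w.getD k 0) _)),
    ← Fin.prod_univ_eq_prod_range (fun k => ∫ ω, f (ξ [] (w.getD k 0) ω) ∂P)]
  have hf_eval : ∀ j, Measurable fun x : ℕ → ℝ => f (x j) :=
    fun j => hf.comp (measurable_pi_apply j)
  rw [(hindep.precomp (injective_take_fin_length w)).integral_fun_prod_comp
    (f := fun k x => f (x (w.getD k 0)))
    (fun _ => (measurable_pi_lambda _ fun i => hmeas _ i).aemeasurable)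
    (fun _ => (hf_eval _).aestronglyMeasurable)]
  exact prod_congr rfl fun k _ => ((hident _).comp (hf_eval _)).integral_eq

theorem ae_forall_factor_mem_Icc (hξ : ∀ u i, ∀ᵐ ω ∂P, ξ u i ω ∈ Set.Icc 0 1)
    (u : List ℕ) :
    ∀ᵐ ω ∂P, ∀ k ∈ range u.length, ξ (u.take k) (u.getD k 0) ω ∈ Set.Icc 0 1 :=
  (eventually_all_finset _).2 fun _ _ => hξ _ _

theorem ae_xibar_mem_Icc (hξ : ∀ u i, ∀ᵐ ω ∂P, ξ u i ω ∈ Set.Icc 0 1) (u : List ℕ) :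
    ∀ᵐ ω ∂P, xibar ξ u ω ∈ Set.Icc 0 1 := by
  filter_upwards [ae_forall_factor_mem_Icc hξ u] with ω hω
  exact ⟨prod_nonneg fun k hk => (hω k hk).1,
    prod_le_one (fun k hk => (hω k hk).1) fun k hk => (hω k hk).2⟩

theorem memLp_xibar_rpow [IsFiniteMeasure P] (hmeas : ∀ u i, Measurable (ξ u i))
    (hξ : ∀ u i, ∀ᵐ ω ∂P, ξ u i ω ∈ Set.Icc 0 1) {b : ℝ} (hb : 0 ≤ b) (u : List ℕ)
    (p : ℝ≥0∞) : MemLp (fun ω => xibar ξ u ω ^ b) p P :=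
  memLp_rpow_of_ae_mem_Icc (measurable_prod _ fun _ _ => hmeas _ _)
    (ae_xibar_mem_Icc hξ u) hb p

theorem integral_xibar_rpow (hmeas : ∀ u i, Measurable (ξ u i))
    (hindep : iIndepFun (m := fun _ : List ℕ => (inferInstance : MeasurableSpace (ℕ → ℝ)))
      (fun u ω i => ξ u i ω) P)
    (hident : ∀ u : List ℕ, IdentDistrib (fun ω i => ξ u i ω) (fun ω i => ξ [] i ω) P P)
    (hξ : ∀ u i, ∀ᵐ ω ∂P, ξ u i ω ∈ Set.Icc 0 1) (b : ℝ) (u : List ℕ) :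
    ∫ ω, xibar ξ u ω ^ b ∂P = ∏ k ∈ range u.length, ∫ ω, ξ [] (u.getD k 0) ω ^ b ∂P := by
  rw [← integral_prod_along_word hmeas hindep hident (f := (· ^ b))
    (measurable_id.pow_const b)]
  refine integral_congr_ae ?_
  filter_upwards [ae_forall_factor_mem_Icc hξ u] with ω hω
  exact (Real.finsetProd_rpow _ _ fun k hk => (hω k hk).1) b |>.symm

theorem integral_sq_xibar_rpow (hmeas : ∀ u i, Measurable (ξ u i))
    (hindep : iIndepFun (m := fun _ : List ℕ => (inferInstance : MeasurableSpace (ℕ → ℝ)))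
      (fun u ω i => ξ u i ω) P)
    (hident : ∀ u : List ℕ, IdentDistrib (fun ω i => ξ u i ω) (fun ω i => ξ [] i ω) P P)
    (hξ : ∀ u i, ∀ᵐ ω ∂P, ξ u i ω ∈ Set.Icc 0 1) (b : ℝ) (u : List ℕ) :
    ∫ ω, (xibar ξ u ω ^ b) ^ 2 ∂P
      = ∏ k ∈ range u.length, ∫ ω, ξ [] (u.getD k 0) ω ^ (2 * b) ∂P := by
  rw [← integral_xibar_rpow hmeas hindep hident hξ]
  refine integral_congr_ae <| (ae_xibar_mem_Icc hξ u).mono fun ω h => ?_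
  change (xibar ξ u ω ^ b) ^ 2 = xibar ξ u ω ^ (2 * b)
  rw [← Real.rpow_mul_natCast h.1, Nat.cast_two, mul_comm]

theorem indepFun_xibar_rpow_of_indepFun {κ : Type*} {Y : List ℕ → Ω → ℝ}
    (hYξ : IndepFun (fun ω u => Y u ω) (fun ω (p : List ℕ × ℕ) => ξ p.1 p.2 ω) P)
    (b : ℝ) (W : κ → List ℕ) :
    IndepFun (fun ω v => xibar ξ (W v) ω ^ b) (fun ω v => Y (W v) ω) P :=
  (hYξ.comp (φ := fun (y : List ℕ → ℝ) (v : κ) => y (W v))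
    (ψ := fun (x : List ℕ × ℕ → ℝ) (v : κ) =>
      (∏ k ∈ range (W v).length, x ((W v).take k, (W v).getD k 0)) ^ b)
    (by fun_prop) (by fun_prop)).symm

end Tree

theorem stmt5_general {Ω : Type*} [m0 : MeasurableSpace Ω] {P : Measure Ω} [IsProbabilityMeasure P]
    (ξ : List ℕ → ℕ → Ω → ℝ)
    (hmeas : ∀ u i, Measurable (ξ u i))
    (hindep : iIndepFun (m := fun _ : List ℕ => (inferInstance : MeasurableSpace (ℕ → ℝ)))
      (fun u ω i => ξ u i ω) P)
    (hident : ∀ u : List ℕ, IdentDistrib (fun ω i => ξ u i ω) (fun ω i => ξ [] i ω) P P)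
    (hval : ∀ u : List ℕ, ∀ᵐ ω ∂P,
      (∀ i, ξ u i ω ∈ Set.Ico (0 : ℝ) 1) ∧ (∑' i, ξ u i ω) = 1)
    (β : ℝ) (hβ : β ∈ Set.Ioc (0 : ℝ) 1)
    (Y : List ℕ → Ω → ℝ)
    (hYindep : iIndepFun (m := fun _ : List ℕ => (inferInstance : MeasurableSpace ℝ)) Y P)
    (hYident : ∀ u : List ℕ, IdentDistrib (Y u) (Y []) P P)
    (hYL2 : MemLp (Y []) 2 P)
    (hYξindep : IndepFun (fun ω => fun u : List ℕ => Y u ω)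
      (fun ω => fun p : List ℕ × ℕ => ξ p.1 p.2 ω) P) :
    ∀ n : ℕ,
      ∫ ω, (Ltilde ξ Y β n ω - (∫ ω', Y [] ω' ∂P) * Lmart ξ β n ω) ^ 2 ∂P
        = variance (Y []) P
            * (∫ ω, ((ξ [] 0 ω) ^ (2 * β) + (ξ [] 1 ω) ^ (2 * β)) ∂P) ^ n := by
  intro n
  set W : (Fin n → Fin 2) → List ℕ := fun v => List.ofFn fun i => (v i : ℕ)
  have hW_inj : W.Injective := List.ofFn_injective.comp Fin.val_injective.comp_left
  have hξ : ∀ u i, ∀ᵐ ω ∂P, ξ u i ω ∈ Set.Icc 0 1 := fun u i =>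
    (hval u).mono fun _ h => Set.Ico_subset_Icc_self (h.1 i)
  have hξ_int : ∀ j, Integrable (fun ω => ξ [] j ω ^ (2 * β)) P := fun j =>
    memLp_one_iff_integrable.1 <|
      memLp_rpow_of_ae_mem_Icc (hmeas [] j) (hξ [] j) (by linarith [hβ.1]) 1
  calc _ = ∫ ω, (∑ v, xibar ξ (W v) ω ^ β * (Y (W v) ω - ∫ ω', Y [] ω' ∂P)) ^ 2 ∂P := by
        simp only [Ltilde, Lmart, mul_comm (∫ ω', Y [] ω' ∂P), sum_mul, mul_sub,
          sum_sub_distrib]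
        rfl
    _ = variance (Y []) P * ∑ v, ∫ ω, (xibar ξ (W v) ω ^ β) ^ 2 ∂P :=
        integral_sq_sum_mul_sub_integral (fun v => memLp_xibar_rpow hmeas hξ hβ.1.le _ 2) hYL2
          (fun v => hYident (W v)) (fun u v huv => hYindep.indepFun (hW_inj.ne huv))
          (indepFun_xibar_rpow_of_indepFun hYξindep β W)
    _ = variance (Y []) P * ∑ v : Fin n → Fin 2, ∏ k, ∫ ω, ξ [] (v k) ω ^ (2 * β) ∂P := by
        refine congrArg _ (sum_congr rfl fun v _ => ?_)
        rw [integral_sq_xibar_rpow hmeas hindep hident hξ]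
        exact prod_range_length_getD_ofFn (fun i => (v i : ℕ))
          fun j => ∫ ω, ξ [] j ω ^ (2 * β) ∂P
    _ = _ := by
        rw [← Fintype.sum_pow (fun j : Fin 2 => ∫ ω, ξ [] j ω ^ (2 * β) ∂P), Fin.sum_univ_two,
          integral_add (hξ_int 0) (hξ_int 1)]
        simp only [Fin.val_zero, Fin.val_one]

/-- With `(Y_u)_{u∈𝕌}` an i.i.d. family of non-negative square-integrable
random variables independent of the i.i.d. family `(ξ_{u,·})_{u∈𝕌}`, `m = E[Y_∅]`,
`L_n = Σ_{u∈{0,1}^n} ξ̄_u^β` and `L̃_n = Σ_{u∈{0,1}^n} ξ̄_u^β Y_u`, one has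
`E[(L̃_n - m L_n)^2] = Var(Y_∅) · (E[ξ_0^{2β} + ξ_1^{2β}])^n` for every `n ≥ 0`. -/
theorem stmt5 {Ω : Type*} [m0 : MeasurableSpace Ω] {P : Measure Ω} [IsProbabilityMeasure P]
    (ξ : List ℕ → ℕ → Ω → ℝ)
    (hmeas : ∀ u i, Measurable (ξ u i))
    (hindep : iIndepFun (m := fun _ : List ℕ => (inferInstance : MeasurableSpace (ℕ → ℝ)))
      (fun u ω i => ξ u i ω) P)
    (hident : ∀ u : List ℕ, IdentDistrib (fun ω i => ξ u i ω) (fun ω i => ξ [] i ω) P P)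
    (hval : ∀ u : List ℕ, ∀ᵐ ω ∂P,
      (∀ i, ξ u i ω ∈ Set.Ico (0 : ℝ) 1) ∧ (∑' i, ξ u i ω) = 1)
    (β : ℝ) (hβ : β ∈ Set.Ioc (0 : ℝ) 1)
    (Y : List ℕ → Ω → ℝ)
    (hYmeas : ∀ u, Measurable (Y u))
    (hYindep : iIndepFun (m := fun _ : List ℕ => (inferInstance : MeasurableSpace ℝ)) Y P)
    (hYident : ∀ u : List ℕ, IdentDistrib (Y u) (Y []) P P)
    (hYnonneg : ∀ u, ∀ᵐ ω ∂P, 0 ≤ Y u ω)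
    (hYL2 : MemLp (Y []) 2 P)
    (hYξindep : IndepFun (fun ω => fun u : List ℕ => Y u ω)
      (fun ω => fun p : List ℕ × ℕ => ξ p.1 p.2 ω) P) :
    ∀ n : ℕ,
      ∫ ω, (Ltilde ξ Y β n ω - (∫ ω', Y [] ω' ∂P) * Lmart ξ β n ω) ^ 2 ∂P
        = variance (Y []) P
            * (∫ ω, ((ξ [] 0 ω) ^ (2 * β) + (ξ [] 1 ω) ^ (2 * β)) ∂P) ^ n :=
  stmt5_general (m0 := m0) ξ hmeas hindep hident hval β hβ Y hYindep hYident hYL2 hYξindep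
end
end

section
/- Let ((ξ_{u,i})_{i≥0})_{u∈𝕌} be an i.i.d. family of random sequences with values in the set of sequences (x_i)_{i≥0} with x_i ∈ [0,1) for all i and Σ_{i≥0} x_i = 1, let β ∈ (0,1) and let p be such that pβ > 1. Then for every k ≥ 0, Σ_{u ∈ ⋃_{t≥0} ℕ^k×{0,1}^t} E[ξ̄_u^{pβ}] ≤ (E[Σ_{j≥0} ξ_j^{pβ}])^k · (1 − E[ξ_0^{pβ} + ξ_1^{pβ}])^{−1}, where the sum is over all words of the form u = w v with w ∈ ℕ^k and v ∈ {0,1}^t for some t ≥ 0; moreover this upper bound tends to 0 as k → ∞. -/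
open MeasureTheory ProbabilityTheory Filter
open scoped ENNReal Topology

noncomputable section

/-! Expectations factorise along a word: by independence of the sequences attached to distinct
prefixes and their common law, `E[ξ̄_u^{q}] = ∏ₖ e(uₖ)` with `e j = E[ξ_j^{q}]`, `q = pβ`. Summing
over `w ∈ ℕ^k` gives `(Σⱼ e j)^k`, and over the binary tails a geometric series in
`e 0 + e 1`. Both ratios are below `1` because `x^{q} < x` on `(0,1)` for `q > 1`, while
`Σ ξ_j = 1` forces some `ξ_j > 0`. -/

theorem ENNReal.tsum_fin_pi_prod {α : Type*} (f : α → ℝ≥0∞) (k : ℕ) :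
    ∑' w : Fin k → α, ∏ i, f (w i) = (∑' a, f a) ^ k := by
  induction k with
  | zero => simp
  | succ k ih =>
    rw [← (Fin.consEquiv fun _ => α).tsum_eq, ENNReal.tsum_prod']
    simp only [Fin.consEquiv_apply, Fin.prod_univ_succ, Fin.cons_zero, Fin.cons_succ,
      ENNReal.tsum_mul_left, ENNReal.tsum_mul_right, ih, pow_succ']

theorem ENNReal.sum_fin_two_pow_prod (e : ℕ → ℝ≥0∞) (t : ℕ) :
    ∑ v : Fin t → Fin 2, ∏ i, e (v i) = (e 0 + e 1) ^ t := by
  simpa [Fin.sum_univ_two] using (Fintype.sum_pow (fun c : Fin 2 => e c) t).symm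

theorem tsum_words_map_prod (e : ℕ → ℝ≥0∞) (k : ℕ) :
    ∑' w : Fin k → ℕ, ∑' t : ℕ, ∑ v : Fin t → Fin 2,
        ((List.ofFn w ++ List.ofFn fun i => (v i : ℕ)).map e).prod
      = (∑' j, e j) ^ k * (1 - (e 0 + e 1))⁻¹ := by
  simp only [List.map_append, List.prod_append, List.map_ofFn, List.prod_ofFn,
    Function.comp_apply, ← Finset.mul_sum, ENNReal.sum_fin_two_pow_prod, ENNReal.tsum_mul_left,
    ENNReal.tsum_mul_right, ENNReal.tsum_geometric, ENNReal.tsum_fin_pi_prod]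

theorem tsum_ofReal_rpow_lt_one {ι : Type*} {x : ι → ℝ} (hx : ∀ i, x i ∈ Set.Ico (0 : ℝ) 1)
    (hsum : ∑' i, x i = 1) {q : ℝ} (hq : 1 < q) :
    ∑' i, ENNReal.ofReal (x i ^ q) < 1 := by
  have hsummable : Summable x := by
    by_contra h
    simp [tsum_eq_zero_of_not_summable h] at hsum
  have hone : ∑' i, ENNReal.ofReal (x i) = 1 := by
    rw [← ENNReal.ofReal_tsum_of_nonneg (fun i => (hx i).1) hsummable, hsum, ENNReal.ofReal_one]
  have hle : ∀ i, ENNReal.ofReal (x i ^ q) ≤ ENNReal.ofReal (x i) := fun i =>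
    ENNReal.ofReal_le_ofReal (Real.rpow_le_self_of_le_one (hx i).1 (hx i).2.le hq.le)
  obtain ⟨j, hj⟩ : ∃ j, 0 < x j := by
    by_contra! h
    simp [fun i => le_antisymm (h i) (hx i).1] at hsum
  have hlt : ENNReal.ofReal (x j ^ q) < ENNReal.ofReal (x j) := by
    rw [ENNReal.ofReal_lt_ofReal_iff hj]
    simpa using Real.rpow_lt_rpow_of_exponent_gt hj (hx j).2 hq
  calc ∑' i, ENNReal.ofReal (x i ^ q)
      < ∑' i, ENNReal.ofReal (x i) :=
        ENNReal.tsum_lt_tsum (ne_top_of_le_ne_top (by simp [hone]) (ENNReal.tsum_le_tsum hle))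
          hle hlt
    _ = 1 := hone

theorem xibar_rpow_eq_prod {Ω : Type*} {ξ : List ℕ → ℕ → Ω → ℝ} {q : ℝ} {u : List ℕ} {ω : Ω}
    (hnonneg : ∀ k < u.length, 0 ≤ ξ (u.take k) (u.getD k 0) ω) :
    xibar ξ u ω ^ q = ∏ k : Fin u.length, ξ (u.take k) (u.getD k 0) ω ^ q := by
  rw [xibar, ← Real.finsetProd_rpow _ _ fun k hk => hnonneg k (Finset.mem_range.1 hk),
    Finset.prod_range]

section Moments

variable {Ω : Type*} [MeasurableSpace Ω] {P : Measure Ω} {q : ℝ}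

theorem lintegral_tsum_ofReal_rpow_lt_one [IsProbabilityMeasure P] {ι : Type*} {X : ι → Ω → ℝ}
    (hX : ∀ᵐ ω ∂P, (∀ i, X i ω ∈ Set.Ico (0 : ℝ) 1) ∧ ∑' i, X i ω = 1) (hq : 1 < q) :
    ∫⁻ ω, ∑' i, ENNReal.ofReal (X i ω ^ q) ∂P < 1 := by
  have hlt : ∀ᵐ ω ∂P, ∑' i, ENNReal.ofReal (X i ω ^ q) < 1 :=
    hX.mono fun ω h => tsum_ofReal_rpow_lt_one h.1 h.2 hq
  have hfin : ∫⁻ ω, ∑' i, ENNReal.ofReal (X i ω ^ q) ∂P ≠ ∞ :=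
    ne_top_of_le_ne_top (by simp) (lintegral_mono_ae (g := fun _ => 1) (hlt.mono fun _ h => h.le))
  simpa using lintegral_strict_mono (IsProbabilityMeasure.ne_zero P) aemeasurable_const hfin hlt

theorem ofReal_one_sub_integral_rpow_add_rpow [IsFiniteMeasure P] {X Y : Ω → ℝ}
    (hX : Measurable X) (hY : Measurable Y) (hXv : ∀ᵐ ω ∂P, X ω ∈ Set.Icc (0 : ℝ) 1)
    (hYv : ∀ᵐ ω ∂P, Y ω ∈ Set.Icc (0 : ℝ) 1) (hq : 0 ≤ q) :
    ENNReal.ofReal (1 - ∫ ω, (X ω ^ q + Y ω ^ q) ∂P)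
      = 1 - (∫⁻ ω, ENNReal.ofReal (X ω ^ q) ∂P + ∫⁻ ω, ENNReal.ofReal (Y ω ^ q) ∂P) := by
  have nonneg_integrable : ∀ {Z : Ω → ℝ}, Measurable Z → (∀ᵐ ω ∂P, Z ω ∈ Set.Icc (0 : ℝ) 1) →
      0 ≤ᵐ[P] (fun ω => Z ω ^ q) ∧ Integrable (fun ω => Z ω ^ q) P := fun hZ hZv =>
    ⟨hZv.mono fun ω h => Real.rpow_nonneg h.1 q,
      .of_bound (hZ.pow_const q).aestronglyMeasurable 1 <| hZv.mono fun ω h => by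
        rw [Real.norm_of_nonneg (Real.rpow_nonneg h.1 q)]
        exact Real.rpow_le_one h.1 h.2 hq⟩
  obtain ⟨hX0, hXi⟩ := nonneg_integrable hX hXv
  obtain ⟨hY0, hYi⟩ := nonneg_integrable hY hYv
  have hX0' := integral_nonneg_of_ae hX0
  have hY0' := integral_nonneg_of_ae hY0
  rw [integral_add hXi hYi, ENNReal.ofReal_sub _ (add_nonneg hX0' hY0'), ENNReal.ofReal_one,
    ENNReal.ofReal_add hX0' hY0',
    ofReal_integral_eq_lintegral_ofReal hXi hX0, ofReal_integral_eq_lintegral_ofReal hYi hY0]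

theorem lintegral_ofReal_xibar_rpow {ξ : List ℕ → ℕ → Ω → ℝ} (hmeas : ∀ u i, Measurable (ξ u i))
    (hindep : iIndepFun (m := fun _ : List ℕ => (inferInstance : MeasurableSpace (ℕ → ℝ)))
      (fun u ω i => ξ u i ω) P)
    (hident : ∀ u : List ℕ, IdentDistrib (fun ω i => ξ u i ω) (fun ω i => ξ [] i ω) P P)
    (hnonneg : ∀ u i, 0 ≤ᵐ[P] ξ u i) (u : List ℕ) :
    ∫⁻ ω, ENNReal.ofReal (xibar ξ u ω ^ q) ∂P
      = (u.map fun j => ∫⁻ ω, ENNReal.ofReal (ξ [] j ω ^ q) ∂P).prod := by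
  have hmeas_q : Measurable fun x : ℝ => ENNReal.ofReal (x ^ q) :=
    (measurable_id.pow_const q).ennreal_ofReal
  have hprefix : Function.Injective fun k : Fin u.length => u.take k := fun a b h =>
    Fin.ext (by simpa [a.isLt.le, b.isLt.le] using congrArg List.length h)
  have hind := (hindep.precomp hprefix).comp
    (fun k (x : ℕ → ℝ) => ENNReal.ofReal (x (u.getD k 0) ^ q))
    (fun k => hmeas_q.comp (measurable_pi_apply _))
  have hfactors : ∀ᵐ ω ∂P, ENNReal.ofReal (xibar ξ u ω ^ q)
      = ∏ k : Fin u.length, ENNReal.ofReal (ξ (u.take k) (u.getD k 0) ω ^ q) := by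
    filter_upwards [ae_all_iff.2 fun k : Fin u.length => hnonneg (u.take k) (u.getD k 0)]
      with ω hω
    rw [xibar_rpow_eq_prod fun k hk => hω ⟨k, hk⟩,
      ENNReal.ofReal_prod_of_nonneg fun k _ => Real.rpow_nonneg (hω k) q]
  calc ∫⁻ ω, ENNReal.ofReal (xibar ξ u ω ^ q) ∂P
      = ∫⁻ ω, ∏ k : Fin u.length, ENNReal.ofReal (ξ (u.take k) (u.getD k 0) ω ^ q) ∂P :=
        lintegral_congr_ae hfactors
    _ = ∏ k : Fin u.length, ∫⁻ ω, ENNReal.ofReal (ξ (u.take k) (u.getD k 0) ω ^ q) ∂P :=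
        lintegral_prod_eq_prod_lintegral_of_indepFun _ _ hind
          fun k => hmeas_q.comp (hmeas _ _)
    _ = ∏ k : Fin u.length, ∫⁻ ω, ENNReal.ofReal (ξ [] (u.getD k 0) ω ^ q) ∂P :=
        Finset.prod_congr rfl fun k _ =>
          ((hident _).comp (hmeas_q.comp (measurable_pi_apply (u.getD k 0)))).lintegral_eq
    _ = _ := by
      rw [← List.ofFn_getElem_eq_map, List.prod_ofFn]
      simp

end Moments

theorem stmt10_general {Ω : Type*} [m0 : MeasurableSpace Ω] {P : Measure Ω} [IsProbabilityMeasure P]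
    (ξ : List ℕ → ℕ → Ω → ℝ)
    (hmeas : ∀ u i, Measurable (ξ u i))
    (hindep : iIndepFun (m := fun _ : List ℕ => (inferInstance : MeasurableSpace (ℕ → ℝ)))
      (fun u ω i => ξ u i ω) P)
    (hident : ∀ u : List ℕ, IdentDistrib (fun ω i => ξ u i ω) (fun ω i => ξ [] i ω) P P)
    (hval : ∀ u : List ℕ, ∀ᵐ ω ∂P,
      (∀ i, ξ u i ω ∈ Set.Ico (0 : ℝ) 1) ∧ (∑' i, ξ u i ω) = 1)
    (β : ℝ) (p : ℝ) (hpβ : 1 < p * β) :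
    (∀ k : ℕ,
      (∑' w : Fin k → ℕ, ∑' t : ℕ, ∑ v : Fin t → Fin 2,
          ∫⁻ ω, ENNReal.ofReal
            ((xibar ξ (List.ofFn w ++ List.ofFn fun i => ((v i : ℕ))) ω) ^ (p * β)) ∂P)
        ≤ (∫⁻ ω, ∑' j : ℕ, ENNReal.ofReal ((ξ [] j ω) ^ (p * β)) ∂P) ^ k
            * (ENNReal.ofReal
                (1 - ∫ ω, ((ξ [] 0 ω) ^ (p * β) + (ξ [] 1 ω) ^ (p * β)) ∂P))⁻¹) ∧
    Tendsto (fun k : ℕ =>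
        (∫⁻ ω, ∑' j : ℕ, ENNReal.ofReal ((ξ [] j ω) ^ (p * β)) ∂P) ^ k
          * (ENNReal.ofReal
              (1 - ∫ ω, ((ξ [] 0 ω) ^ (p * β) + (ξ [] 1 ω) ^ (p * β)) ∂P))⁻¹)
      atTop (𝓝 0) := by
  set e : ℕ → ℝ≥0∞ := fun j => ∫⁻ ω, ENNReal.ofReal (ξ [] j ω ^ (p * β)) ∂P
  have hFmeas : ∀ j, Measurable fun ω => ENNReal.ofReal (ξ [] j ω ^ (p * β)) := fun j =>
    ((hmeas [] j).pow_const _).ennreal_ofReal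
  have hunit : ∀ u i, ∀ᵐ ω ∂P, ξ u i ω ∈ Set.Icc (0 : ℝ) 1 := fun u i =>
    (hval u).mono fun ω h => Set.Ico_subset_Icc_self (h.1 i)
  have hA : ∫⁻ ω, ∑' j, ENNReal.ofReal (ξ [] j ω ^ (p * β)) ∂P = ∑' j, e j :=
    lintegral_tsum fun j => (hFmeas j).aemeasurable
  have hA_lt : ∑' j, e j < 1 := hA ▸ lintegral_tsum_ofReal_rpow_lt_one (hval []) hpβ
  have he_lt : e 0 + e 1 < 1 := by
    refine lt_of_le_of_lt ?_ hA_lt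
    simpa using ENNReal.sum_le_tsum (f := e) {0, 1}
  rw [hA, ofReal_one_sub_integral_rpow_add_rpow (hmeas [] 0) (hmeas [] 1) (hunit [] 0)
    (hunit [] 1) (zero_le_one.trans hpβ.le)]
  refine ⟨fun k => ?_, ?_⟩
  · simp_rw [lintegral_ofReal_xibar_rpow hmeas hindep hident
      fun u i => (hunit u i).mono fun ω h => h.1]
    exact (tsum_words_map_prod e k).le
  · simpa using ENNReal.Tendsto.mul_const (ENNReal.tendsto_pow_atTop_nhds_zero_of_lt_one hA_lt)
      (Or.inr (ENNReal.inv_ne_top.2 (tsub_pos_of_lt he_lt).ne'))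

/-- For an i.i.d. family `(ξ_{u,·})_{u∈𝕌}` of random sequences with values
in `[0,1)` summing to `1`, `β ∈ (0,1)` and `pβ > 1`, for every `k ≥ 0` the sum of
`E[ξ̄_u^{pβ}]` over all words `u = w v` with `w ∈ ℕ^k` and `v ∈ {0,1}^t`, `t ≥ 0`, is bounded
by `(E[Σ_{j≥0} ξ_j^{pβ}])^k · (1 - E[ξ_0^{pβ} + ξ_1^{pβ}])⁻¹`, and this upper bound tends
to `0` as `k → ∞`. -/
theorem stmt10 {Ω : Type*} [m0 : MeasurableSpace Ω] {P : Measure Ω} [IsProbabilityMeasure P]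
    (ξ : List ℕ → ℕ → Ω → ℝ)
    (hmeas : ∀ u i, Measurable (ξ u i))
    (hindep : iIndepFun (m := fun _ : List ℕ => (inferInstance : MeasurableSpace (ℕ → ℝ)))
      (fun u ω i => ξ u i ω) P)
    (hident : ∀ u : List ℕ, IdentDistrib (fun ω i => ξ u i ω) (fun ω i => ξ [] i ω) P P)
    (hval : ∀ u : List ℕ, ∀ᵐ ω ∂P,
      (∀ i, ξ u i ω ∈ Set.Ico (0 : ℝ) 1) ∧ (∑' i, ξ u i ω) = 1)
    (β : ℝ) (hβ : β ∈ Set.Ioo (0 : ℝ) 1) (p : ℝ) (hpβ : 1 < p * β) :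
    (∀ k : ℕ,
      (∑' w : Fin k → ℕ, ∑' t : ℕ, ∑ v : Fin t → Fin 2,
          ∫⁻ ω, ENNReal.ofReal
            ((xibar ξ (List.ofFn w ++ List.ofFn fun i => ((v i : ℕ))) ω) ^ (p * β)) ∂P)
        ≤ (∫⁻ ω, ∑' j : ℕ, ENNReal.ofReal ((ξ [] j ω) ^ (p * β)) ∂P) ^ k
            * (ENNReal.ofReal
                (1 - ∫ ω, ((ξ [] 0 ω) ^ (p * β) + (ξ [] 1 ω) ^ (p * β)) ∂P))⁻¹) ∧
    Tendsto (fun k : ℕ =>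
        (∫⁻ ω, ∑' j : ℕ, ENNReal.ofReal ((ξ [] j ω) ^ (p * β)) ∂P) ^ k
          * (ENNReal.ofReal
              (1 - ∫ ω, ((ξ [] 0 ω) ^ (p * β) + (ξ [] 1 ω) ^ (p * β)) ∂P))⁻¹)
      atTop (𝓝 0) :=
  stmt10_general (m0 := m0) ξ hmeas hindep hident hval β p hpβ
end
end
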